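/- arXiv:1608.08288 — 2 statements merged into one kernel-verified Lean document; each statement's English description precedes it below -/
import Mathlib

section
/- For any m-dimensional subspace X of R^n with m ≥ 1 and any k ≥ 0 such that k ≤ varbar(v) ≤ k+m-1 for all nonzero v in X, there exist nonzero vectors v, w in X with varbar(v) = k+m-1 and varbar(w) = k. -/
open scoped BigOperators

/-- Number of sign changes between consecutive entries of a list of reals. -/
noncomputable def listVar : List ℝ → ℕ
  | a :: b :: t => (if a * b < 0 then 1 else 0) + listVar (b :: t)
  | _ => 0

/-- `var v` : the number of sign changes of `v`, ignoring zero entries. -/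
noncomputable def var {n : ℕ} (v : Fin n → ℝ) : ℕ :=
  listVar ((List.ofFn v).filter (fun x => x ≠ 0))

/-- `varbar v` : the maximum of `var w` over all `w` agreeing with `v` on the
nonzero entries of `v`. -/
noncomputable def varbar {n : ℕ} (v : Fin n → ℝ) : ℕ :=
  sSup {m | ∃ w : Fin n → ℝ, (∀ i, v i ≠ 0 → w i = v i) ∧ var w = m}

/-- `altv v = (v 0, -v 1, v 2, ...)`. -/
def altv {n : ℕ} (v : Fin n → ℝ) : Fin n → ℝ := fun i => (-1 : ℝ) ^ (i : ℕ) * v i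

/-- A vector with entries in `{0, 1, -1}`, representing a sign vector. -/
def IsSignVec {n : ℕ} (σ : Fin n → ℝ) : Prop := ∀ i, σ i = 0 ∨ σ i = 1 ∨ σ i = -1

lemma listVar_nil : listVar [] = 0 := rfl
lemma listVar_single (a : ℝ) : listVar [a] = 0 := rfl
lemma listVar_cons_cons (a b : ℝ) (t : List ℝ) :
    listVar (a :: b :: t) = (if a * b < 0 then 1 else 0) + listVar (b :: t) := rfl

lemma listVar_le_cons (a : ℝ) (l : List ℝ) : listVar l ≤ listVar (a :: l) := by
  cases l with
  | nil => simp [listVar]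
  | cons b t => rw [listVar_cons_cons]; omega

lemma ind_triangle (a c y : ℝ) (hy : y ≠ 0) :
    (if a * c < 0 then (1:ℕ) else 0) ≤ (if a * y < 0 then 1 else 0) + (if y * c < 0 then 1 else 0) := by
  by_cases h1 : a * y < 0 <;> by_cases h2 : y * c < 0 <;>
    simp only [h1, h2, if_true, if_false] <;>
    split <;> try omega
  all_goals rename_i h3; exfalso; nlinarith [sq_nonneg y, mul_self_pos.mpr hy]

lemma listVar_cons_le_cons (a y : ℝ) (hy : y ≠ 0) (l : List ℝ) :
    listVar (a :: l) ≤ (if a * y < 0 then 1 else 0) + listVar (y :: l) := by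
  cases l with
  | nil => simp [listVar]
  | cons c r =>
    rw [listVar_cons_cons, listVar_cons_cons]
    have := ind_triangle a c y hy
    omega

lemma listVar_lt_length (l : List ℝ) (h : l ≠ []) : listVar l < l.length := by
  induction l with
  | nil => simp at h
  | cons a t ih =>
    cases t with
    | nil => simp [listVar]
    | cons b r =>
      rw [listVar_cons_cons]
      have := ih (by simp)
      have h2 : (if a * b < 0 then (1:ℕ) else 0) ≤ 1 := by split <;> omega
      simp only [List.length_cons] at *
      omega

lemma listVar_cons_head (a : ℝ) (l : List ℝ) (h : l ≠ []) :
    listVar (a :: l) = (if a * l.head h < 0 then 1 else 0) + listVar l := by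
  cases l with
  | nil => simp at h
  | cons b t => rw [listVar_cons_cons]; rfl

lemma ind_sign_eq (a b x y : ℝ) (hab : a * b > 0) (hxy : x * y > 0) :
    (if a * x < 0 then (1:ℕ) else 0) = (if b * y < 0 then 1 else 0) := by
  have : a * x < 0 ↔ b * y < 0 := by
    constructor <;> intro h <;> nlinarith
  simp [this]

lemma mem_filter_ne_zero {x : ℝ} {l : List ℝ} (h : x ∈ l.filter (fun x => x ≠ 0)) : x ≠ 0 := by
  simp [List.mem_filter] at h; exact h.2

lemma mono_main : ∀ (l w : List ℝ), List.Forall₂ (fun x y => x ≠ 0 → x * y > 0) l w →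
    (listVar (l.filter (fun x => x ≠ 0)) ≤ listVar (w.filter (fun x => x ≠ 0))) ∧
    (∀ a b : ℝ, a * b > 0 →
      listVar (a :: l.filter (fun x => x ≠ 0)) ≤ listVar (b :: w.filter (fun x => x ≠ 0))) := by
  intro l w h
  induction h with
  | nil => exact ⟨le_refl _, fun a b _ => le_refl _⟩
  | @cons x y l' w' hxy hrel ih =>
    by_cases hx : x = 0
    · have hl : (x :: l').filter (fun x => x ≠ 0) = l'.filter (fun x => x ≠ 0) := by
        simp [List.filter_cons, hx]
      by_cases hy : y = 0
      · have hw : (y :: w').filter (fun x => x ≠ 0) = w'.filter (fun x => x ≠ 0) := by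
          simp [List.filter_cons, hy]
        rw [hl, hw]
        exact ih
      · have hw : (y :: w').filter (fun x => x ≠ 0) = y :: w'.filter (fun x => x ≠ 0) := by
          simp [List.filter_cons, hy]
        rw [hl, hw]
        constructor
        · exact le_trans ih.1 (listVar_le_cons _ _)
        · intro a b hab
          refine le_trans (ih.2 a b hab) ?_
          exact le_trans (listVar_cons_le_cons b y hy _) (by rw [listVar_cons_cons])
    · have hy : x * y > 0 := hxy hx
      have hy0 : y ≠ 0 := by intro h0; rw [h0, mul_zero] at hy; exact lt_irrefl _ hy
      have hl : (x :: l').filter (fun x => x ≠ 0) = x :: l'.filter (fun x => x ≠ 0) := by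
        simp [List.filter_cons, hx]
      have hw : (y :: w').filter (fun x => x ≠ 0) = y :: w'.filter (fun x => x ≠ 0) := by
        simp [List.filter_cons, hy0]
      rw [hl, hw]
      constructor
      · exact ih.2 x y hy
      · intro a b hab
        rw [listVar_cons_cons, listVar_cons_cons, ind_sign_eq a b x y hab hy]
        exact Nat.add_le_add_left (ih.2 x y hy) _

lemma forall₂_ofFn {p : ℝ → ℝ → Prop} : ∀ {n : ℕ} (v w : Fin n → ℝ),
    (∀ i, p (v i) (w i)) → List.Forall₂ p (List.ofFn v) (List.ofFn w) := by
  intro n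
  induction n with
  | zero => intro v w _; simp
  | succ n ih =>
    intro v w h
    rw [List.ofFn_succ, List.ofFn_succ]
    exact List.Forall₂.cons (h 0) (ih _ _ (fun i => h i.succ))

lemma var_mono {n : ℕ} (v w : Fin n → ℝ) (h : ∀ i, v i ≠ 0 → v i * w i > 0) :
    var v ≤ var w :=
  (mono_main _ _ (forall₂_ofFn v w h)).1

lemma var_le {n : ℕ} (v : Fin n → ℝ) : var v + 1 ≤ n ∨ var v = 0 := by
  by_cases h : (List.ofFn v).filter (fun x => x ≠ 0) = []
  · right; rw [var, h]; rfl
  · left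
    have h1 := listVar_lt_length _ h
    have h2 : ((List.ofFn v).filter (fun x => x ≠ 0)).length ≤ n := by
      calc _ ≤ (List.ofFn v).length := List.length_filter_le _ _
        _ = n := by simp
    rw [var]; omega

lemma var_le' {n : ℕ} (v : Fin n → ℝ) (hn : 1 ≤ n) : var v ≤ n - 1 := by
  rcases var_le v with h | h <;> omega

def altl : List ℝ → List ℝ
  | [] => []
  | a :: t => a :: (altl t).map (fun x => -x)

lemma listVar_map_neg : ∀ l : List ℝ, listVar (l.map (fun x => -x)) = listVar l := by
  intro l
  induction l with
  | nil => rfl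
  | cons a t ih =>
    cases t with
    | nil => rfl
    | cons b r =>
      simp only [List.map_cons] at *
      rw [listVar_cons_cons, listVar_cons_cons, ih]
      congr 1
      have : -a * -b = a * b := by ring
      rw [this]

lemma map_neg_neg (l : List ℝ) : (l.map (fun x => -x)).map (fun x => -x) = l := by
  rw [List.map_map]; simp

lemma filter_map_neg (l : List ℝ) :
    (l.map (fun x => -x)).filter (fun x => x ≠ 0) = (l.filter (fun x => x ≠ 0)).map (fun x => -x) := by
  induction l with
  | nil => rfl
  | cons a t ih =>
    simp only [List.map_cons, List.filter_cons]
    by_cases h : a = 0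
    · have h1 : (decide (a ≠ 0)) = false := by simp [h]
      have h2 : (decide ((-a) ≠ 0)) = false := by simp [h]
      rw [h1, h2]; simpa using ih
    · have h1 : (decide (a ≠ 0)) = true := by simp [h]
      have h2 : (decide ((-a) ≠ 0)) = true := by simp [h]
      rw [h1, h2]
      simp only [if_true, List.map_cons]
      rw [ih]

noncomputable def zz : List ℝ → ℕ
  | [] => 0
  | a :: t => if a = 0 then zz t + 1 else 0

lemma filter_ne_nil_iff (l : List ℝ) : l.filter (fun x => x ≠ 0) = [] ↔ ∀ x ∈ l, x = 0 := by
  rw [List.filter_eq_nil_iff]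
  simp

lemma mem_altl_zero : ∀ (l : List ℝ), (∀ x ∈ l, x = 0) → ∀ x ∈ altl l, x = 0 := by
  intro l
  induction l with
  | nil => intro _ x hx; simp [altl] at hx
  | cons a t ih =>
    intro h x hx
    rw [altl] at hx
    rcases List.mem_cons.1 hx with h1 | h1
    · rw [h1]; exact h a (by simp)
    · rcases List.mem_map.1 h1 with ⟨y, hy, rfl⟩
      rw [ih (fun z hz => h z (by simp [hz])) y hy, neg_zero]

lemma altl_filter_nil (l : List ℝ) (h : l.filter (fun x => x ≠ 0) = []) :
    (altl l).filter (fun x => x ≠ 0) = [] := by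
  rw [filter_ne_nil_iff] at h ⊢
  exact mem_altl_zero l h

lemma head?_map_neg (l : List ℝ) : (l.map (fun x => -x)).head? = l.head?.map (fun x => -x) := by
  cases l <;> rfl

lemma head?_filter_altl : ∀ (l : List ℝ),
    ((altl l).filter (fun x => x ≠ 0)).head? =
      ((l.filter (fun x => x ≠ 0)).head?).map (fun x => (-1:ℝ)^(zz l) * x) := by
  intro l
  induction l with
  | nil => rfl
  | cons a t ih =>
    by_cases ha : a = 0
    · have h1 : (a :: t).filter (fun x => x ≠ 0) = t.filter (fun x => x ≠ 0) := by
        simp [List.filter_cons, ha]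
      have h2 : (altl (a :: t)).filter (fun x => x ≠ 0)
          = ((altl t).filter (fun x => x ≠ 0)).map (fun x => -x) := by
        rw [altl]
        simp only [List.filter_cons]
        have : (decide (a ≠ 0)) = false := by simp [ha]
        rw [this]
        simp only [Bool.false_eq_true, if_false]
        exact filter_map_neg _
      rw [h1, h2, head?_map_neg, ih, Option.map_map]
      have hz : zz (a :: t) = zz t + 1 := by rw [zz]; simp [ha]
      rw [hz]
      congr 1
      funext x
      simp only [Function.comp_apply]
      ring
    · have h1 : (a :: t).filter (fun x => x ≠ 0) = a :: t.filter (fun x => x ≠ 0) := by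
        simp [List.filter_cons, ha]
      have h2 : (altl (a :: t)).filter (fun x => x ≠ 0)
          = a :: ((altl t).filter (fun x => x ≠ 0)).map (fun x => -x) := by
        rw [altl]
        simp only [List.filter_cons]
        have : (decide (a ≠ 0)) = true := by simp [ha]
        rw [this]
        simp only [if_true]
        rw [filter_map_neg]
      have hz : zz (a :: t) = 0 := by rw [zz]; simp [ha]
      rw [h1, h2, hz]
      simp

lemma ind_pair (x : ℝ) (hx : x ≠ 0) :
    (if x < 0 then (1:ℕ) else 0) + (if -x < 0 then 1 else 0) = 1 := by
  rcases lt_or_gt_of_ne hx with h | h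
  · simp [h, not_lt.2 (le_of_lt (neg_pos.2 h)), asymm h]
  · simp [h, neg_neg, not_lt.2 (le_of_lt h), neg_lt_zero.2 h]

lemma altl_cons_cons (a b : ℝ) (r : List ℝ) :
    altl (a :: b :: r) = a :: (-b) :: altl r := by
  rw [altl, altl]
  simp [map_neg_neg]

lemma C2 : ∀ (l : List ℝ), (∀ x ∈ l, x ≠ 0) → l ≠ [] →
    listVar l + listVar (altl l) + 1 = l.length := by
  intro l
  induction l with
  | nil => intro _ h; simp at h
  | cons a t ih =>
    intro hnz _
    cases t with
    | nil => simp [listVar, altl]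
    | cons b r =>
      have ha : a ≠ 0 := hnz a (by simp)
      have hb : b ≠ 0 := hnz b (by simp)
      have e1 := altl_cons_cons a b r
      have e2 : listVar ((-b) :: altl r) = listVar (altl (b :: r)) := by
        have h3 : ((-b : ℝ) :: altl r).map (fun x => -x) = altl (b :: r) := by
          rw [altl]; simp
        rw [← h3, listVar_map_neg]
      have ihh := ih (fun x hx => hnz x (by simp [hx])) (by simp)
      rw [e1, listVar_cons_cons, listVar_cons_cons, e2]
      have hpair : (if a * b < 0 then (1:ℕ) else 0) + (if a * -b < 0 then 1 else 0) = 1 := by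
        have : a * -b = -(a * b) := by ring
        rw [this]
        exact ind_pair _ (mul_ne_zero ha hb)
      simp only [List.length_cons] at *
      omega

lemma filter_altl_cons_pos (a : ℝ) (t : List ℝ) (ha : a ≠ 0) :
    (altl (a :: t)).filter (fun x => x ≠ 0)
      = a :: ((altl t).filter (fun x => x ≠ 0)).map (fun x => -x) := by
  rw [altl]
  simp only [List.filter_cons]
  have : (decide (a ≠ 0)) = true := by simp [ha]
  rw [this]
  simp only [if_true]
  rw [filter_map_neg]

lemma filter_altl_cons_zero (t : List ℝ) :
    (altl ((0:ℝ) :: t)).filter (fun x => x ≠ 0)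
      = ((altl t).filter (fun x => x ≠ 0)).map (fun x => -x) := by
  rw [altl]
  simp only [List.filter_cons]
  have : (decide ((0:ℝ) ≠ 0)) = false := by simp
  rw [this]
  simp only [Bool.false_eq_true, if_false]
  exact filter_map_neg _

lemma C1 : ∀ (l : List ℝ), l.filter (fun x => x ≠ 0) ≠ [] →
    listVar (l.filter (fun x => x ≠ 0)) + listVar ((altl l).filter (fun x => x ≠ 0))
      + zz l + 1 ≤ l.length := by
  intro l
  induction l with
  | nil => intro h; simp at h
  | cons a t ih =>
    intro hne
    by_cases ha : a = 0
    · subst ha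
      have h1 : ((0:ℝ) :: t).filter (fun x => x ≠ 0) = t.filter (fun x => x ≠ 0) := by
        simp [List.filter_cons]
      rw [h1] at hne ⊢
      rw [filter_altl_cons_zero, listVar_map_neg]
      have hz : zz ((0:ℝ) :: t) = zz t + 1 := by rw [zz]; simp
      rw [hz]
      have := ih hne
      simp only [List.length_cons]
      omega
    · have h1 : (a :: t).filter (fun x => x ≠ 0) = a :: t.filter (fun x => x ≠ 0) := by
        simp [List.filter_cons, ha]
      have hz : zz (a :: t) = 0 := by rw [zz]; simp [ha]
      rw [h1, filter_altl_cons_pos a t ha, hz]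
      by_cases hft : t.filter (fun x => x ≠ 0) = []
      · rw [hft, altl_filter_nil t hft]
        simp [listVar]
      · obtain ⟨h₁, s₁, hs⟩ : ∃ h₁ s₁, t.filter (fun x => x ≠ 0) = h₁ :: s₁ := by
          cases hh : t.filter (fun x => x ≠ 0) with
          | nil => exact absurd hh hft
          | cons x y => exact ⟨x, y, rfl⟩
        have hh₁ : h₁ ≠ 0 := mem_filter_ne_zero (by rw [hs]; simp)
        have hrel := head?_filter_altl t
        rw [hs] at hrel
        simp only [List.head?_cons, Option.map_some] at hrel
        obtain ⟨h₂, s₂, hs'⟩ : ∃ h₂ s₂, (altl t).filter (fun x => x ≠ 0) = h₂ :: s₂ := by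
          cases hh : (altl t).filter (fun x => x ≠ 0) with
          | nil => rw [hh] at hrel; simp at hrel
          | cons x y => exact ⟨x, y, rfl⟩
        rw [hs'] at hrel
        simp only [List.head?_cons, Option.some.injEq] at hrel
        have ihh := ih hft
        rw [hs, hs'] at ihh
        rw [hs, hs']
        have e2 : listVar ((-h₂) :: s₂.map (fun x => -x)) = listVar (h₂ :: s₂) := by
          have : ((h₂ :: s₂).map (fun x => -x)) = (-h₂) :: s₂.map (fun x => -x) := by simp
          rw [← this, listVar_map_neg]
        simp only [List.map_cons]
        rw [listVar_cons_cons, listVar_cons_cons, e2]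
        have hind : (if a * h₁ < 0 then (1:ℕ) else 0) + (if a * -h₂ < 0 then 1 else 0)
            ≤ 1 + zz t := by
          rcases Nat.even_or_odd (zz t) with he | ho
          · have : ((-1:ℝ))^(zz t) = 1 := he.neg_one_pow
            rw [this, one_mul] at hrel
            have : a * -h₂ = -(a * h₁) := by rw [hrel]; ring
            rw [this, ind_pair _ (mul_ne_zero ha hh₁)]
            omega
          · have h2' : ((-1:ℝ))^(zz t) = -1 := ho.neg_one_pow
            rw [h2'] at hrel
            have hzt : 1 ≤ zz t := by
              rcases ho with ⟨c, hc⟩; omega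
            have : (if a * h₁ < 0 then (1:ℕ) else 0) ≤ 1 := by split <;> omega
            have : (if a * -h₂ < 0 then (1:ℕ) else 0) ≤ 1 := by split <;> omega
            omega
        simp only [List.length_cons] at *
        omega

noncomputable def fill (p : ℝ) : List ℝ → List ℝ
  | [] => []
  | a :: t => if a = 0 then p :: fill p t else a :: fill a t

lemma fill_length (p : ℝ) : ∀ l : List ℝ, (fill p l).length = l.length := by
  intro l
  induction l generalizing p with
  | nil => rfl
  | cons a t ih =>
    rw [fill]
    split <;> simp [ih]

lemma fill_mem_ne_zero (p : ℝ) (hp : p ≠ 0) :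
    ∀ l : List ℝ, ∀ x ∈ fill p l, x ≠ 0 := by
  intro l
  induction l generalizing p with
  | nil => intro x hx; simp [fill] at hx
  | cons a t ih =>
    intro x hx
    rw [fill] at hx
    by_cases ha : a = 0
    · rw [if_pos ha] at hx
      rcases List.mem_cons.1 hx with h | h
      · rw [h]; exact hp
      · exact ih p hp x h
    · rw [if_neg ha] at hx
      rcases List.mem_cons.1 hx with h | h
      · rw [h]; exact ha
      · exact ih a ha x h

lemma fill_getElem (p : ℝ) : ∀ (l : List ℝ) (i : ℕ) (h : i < l.length),
    l[i] ≠ 0 → (fill p l)[i]'(by rw [fill_length]; exact h) = l[i] := by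
  intro l
  induction l generalizing p with
  | nil => intro i h; simp at h
  | cons a t ih =>
    intro i h hne
    cases i with
    | zero =>
      simp only [List.getElem_cons_zero] at hne ⊢
      have e : fill p (a :: t) = a :: fill a t := by rw [fill, if_neg hne]
      simp only [e, List.getElem_cons_zero]
    | succ j =>
      simp only [List.getElem_cons_succ] at hne ⊢
      by_cases ha : a = 0
      · have e : fill p (a :: t) = p :: fill p t := by rw [fill, if_pos ha]
        simp only [e, List.getElem_cons_succ]
        exact ih p j _ hne
      · have e : fill p (a :: t) = a :: fill a t := by rw [fill, if_neg ha]
        simp only [e, List.getElem_cons_succ]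
        exact ih a j _ hne

lemma fillseed (p : ℝ) (hp : p ≠ 0) : ∀ l : List ℝ,
    listVar (p :: fill p l) = listVar (p :: l.filter (fun x => x ≠ 0)) := by
  intro l
  induction l generalizing p with
  | nil => rfl
  | cons a t ih =>
    by_cases ha : a = 0
    · rw [fill, if_pos ha]
      have h1 : (a :: t).filter (fun x => x ≠ 0) = t.filter (fun x => x ≠ 0) := by
        simp [List.filter_cons, ha]
      rw [h1, listVar_cons_cons, ← ih p hp]
      simp [mul_self_nonneg p, not_lt.2 (mul_self_nonneg p)]
    · rw [fill, if_neg ha]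
      have h1 : (a :: t).filter (fun x => x ≠ 0) = a :: t.filter (fun x => x ≠ 0) := by
        simp [List.filter_cons, ha]
      rw [h1, listVar_cons_cons, listVar_cons_cons, ih a ha]

lemma ofFn_altv : ∀ {n : ℕ} (v : Fin n → ℝ), List.ofFn (altv v) = altl (List.ofFn v) := by
  intro n
  induction n with
  | zero => intro v; rfl
  | succ n ih =>
    intro v
    rw [List.ofFn_succ, List.ofFn_succ, altl]
    congr 1
    · simp [altv]
    · rw [← ih (fun i => v i.succ), List.map_ofFn]
      apply List.ext_getElem (by simp)
      intro i h1 h2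
      simp only [List.getElem_ofFn, Function.comp_apply, altv, Fin.val_succ]
      rw [pow_succ]
      ring

lemma altv_altv {n : ℕ} (v : Fin n → ℝ) : altv (altv v) = v := by
  funext i
  simp only [altv, ← mul_assoc, ← pow_add]
  rw [Even.neg_one_pow ⟨(i:ℕ), rfl⟩, one_mul]

lemma altv_ne_zero {n : ℕ} {v : Fin n → ℝ} (hv : v ≠ 0) : altv v ≠ 0 := by
  intro h
  apply hv
  funext i
  have : altv v i = 0 := by rw [h]; rfl
  simp only [altv, mul_eq_zero] at this
  rcases this with h1 | h1
  · exact absurd h1 (by positivity)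
  · exact h1

lemma sum_le {n : ℕ} (v w : Fin n → ℝ) (hcompl : ∀ i, v i ≠ 0 → w i = v i) (hn : 1 ≤ n) :
    var w + var (altv v) + 1 ≤ n := by
  have hmono : var (altv v) ≤ var (altv w) := by
    apply var_mono
    intro i hi
    have hv : v i ≠ 0 := by
      intro h; apply hi; simp [altv, h]
    rw [altv, altv, hcompl i hv]
    have : ((-1:ℝ)^(i:ℕ) * v i) * ((-1:ℝ)^(i:ℕ) * v i) = ((-1:ℝ)^(i:ℕ) * v i)^2 := by ring
    rw [this]
    positivity
  by_cases hf : (List.ofFn w).filter (fun x => x ≠ 0) = []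
  · have hwz : ∀ x ∈ List.ofFn w, x = 0 := (filter_ne_nil_iff _).1 hf
    have haz : (List.ofFn (altv w)).filter (fun x => x ≠ 0) = [] := by
      rw [filter_ne_nil_iff]
      intro x hx
      rw [List.mem_ofFn] at hx
      obtain ⟨i, rfl⟩ := hx
      have : w i = 0 := hwz (w i) (by rw [List.mem_ofFn]; exact ⟨i, rfl⟩)
      simp [altv, this]
    have h1 : var w = 0 := by rw [var, hf]; rfl
    have h2 : var (altv w) = 0 := by rw [var, haz]; rfl
    omega
  · have := C1 (List.ofFn w) hf
    rw [← ofFn_altv] at this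
    have hlen : (List.ofFn w).length = n := by simp
    have : var w + var (altv w) + 1 ≤ n := by
      rw [var, var]; omega
    omega

lemma exists_completion {n : ℕ} (v : Fin n → ℝ) (hv : v ≠ 0) :
    ∃ w : Fin n → ℝ, (∀ i, v i ≠ 0 → w i = v i) ∧ var w + (var (altv v) + 1) = n := by
  obtain ⟨i0, hi0⟩ : ∃ i, v i ≠ 0 := by
    by_contra hc
    push_neg at hc
    exact hv (funext fun i => hc i)
  have hn : 1 ≤ n := i0.pos
  set lv := List.ofFn (altv v) with hlv
  have hmem : altv v i0 ∈ lv := by rw [hlv, List.mem_ofFn]; exact ⟨i0, rfl⟩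
  have hav : altv v i0 ≠ 0 := by
    simp only [altv, mul_ne_zero_iff]
    exact ⟨by positivity, hi0⟩
  have hfne : lv.filter (fun x => x ≠ 0) ≠ [] := by
    apply List.ne_nil_of_mem (a := altv v i0)
    rw [List.mem_filter]
    exact ⟨hmem, by simp [hav]⟩
  obtain ⟨p, s, hps⟩ : ∃ p s, lv.filter (fun x => x ≠ 0) = p :: s := by
    cases hh : lv.filter (fun x => x ≠ 0) with
    | nil => exact absurd hh hfne
    | cons x y => exact ⟨x, y, rfl⟩
  have hp : p ≠ 0 := mem_filter_ne_zero (l := lv) (by rw [hps]; simp)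
  have hlvlen : lv.length = n := by simp [hlv]
  have hFlen : (fill p lv).length = n := by rw [fill_length, hlvlen]
  -- F = p :: fill p (tail)
  obtain ⟨a, t, hat⟩ : ∃ a t, lv = a :: t := by
    cases hh : lv with
    | nil => rw [hh] at hfne; exact absurd rfl hfne
    | cons x y => exact ⟨x, y, rfl⟩
  have hFeq : fill p lv = p :: fill p t := by
    rw [hat, fill]
    by_cases ha : a = 0
    · rw [if_pos ha]
    · rw [if_neg ha]
      have : (a :: t).filter (fun x => x ≠ 0) = a :: t.filter (fun x => x ≠ 0) := by
        simp [List.filter_cons, ha]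
      rw [hat, this] at hps
      have hap : a = p := (List.cons_eq_cons.1 hps).1
      rw [hap]
  have hFvar : listVar (fill p lv) = listVar (lv.filter (fun x => x ≠ 0)) := by
    rw [hFeq, fillseed p hp t, hps]
    by_cases ha : a = 0
    · have : (a :: t).filter (fun x => x ≠ 0) = t.filter (fun x => x ≠ 0) := by
        simp [List.filter_cons, ha]
      rw [hat, this] at hps
      rw [hps, listVar_cons_cons]
      simp [not_lt.2 (mul_self_nonneg p)]
    · have : (a :: t).filter (fun x => x ≠ 0) = a :: t.filter (fun x => x ≠ 0) := by
        simp [List.filter_cons, ha]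
      rw [hat, this] at hps
      rw [(List.cons_eq_cons.1 hps).2]
  -- define w'
  set w' : Fin n → ℝ := fun i => (fill p lv)[(i:ℕ)]'(by rw [hFlen]; exact i.isLt) with hw'
  have hofFnw' : List.ofFn w' = fill p lv := by
    apply List.ext_getElem
    · simp [hFlen]
    · intro i h1 h2
      simp [hw']
  have hw'ne : ∀ i, w' i ≠ 0 := by
    intro i
    apply fill_mem_ne_zero p hp lv
    exact List.getElem_mem _
  set w : Fin n → ℝ := altv w' with hwdef
  have hwne : ∀ i, w i ≠ 0 := by
    intro i
    simp only [hwdef, altv, mul_ne_zero_iff]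
    exact ⟨by positivity, hw'ne i⟩
  refine ⟨w, ?_, ?_⟩
  · intro i hi
    have havi : altv v i ≠ 0 := by
      simp only [altv, mul_ne_zero_iff]
      exact ⟨by positivity, hi⟩
    have hlvi : lv[(i:ℕ)]'(by rw [hlvlen]; exact i.isLt) = altv v i := by
      simp [hlv]
    have : w' i = altv v i := by
      rw [hw']
      simp only
      rw [fill_getElem p lv (i:ℕ) (by rw [hlvlen]; exact i.isLt) (by rw [hlvi]; exact havi), hlvi]
    rw [hwdef]
    simp only [altv, this]
    calc (-1:ℝ)^(i:ℕ) * ((-1:ℝ)^(i:ℕ) * v i) = ((-1:ℝ)^(i:ℕ))^2 * v i := by ring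
    _ = v i := by rw [← pow_mul, Even.neg_one_pow ⟨(i:ℕ), by ring⟩, one_mul]
  · have hfw : (List.ofFn w).filter (fun x => x ≠ 0) = List.ofFn w := by
      apply List.filter_eq_self.2
      intro x hx
      rw [List.mem_ofFn] at hx
      obtain ⟨i, rfl⟩ := hx
      simp [hwne i]
    have hC2 := C2 (List.ofFn w) (by
      intro x hx
      rw [List.mem_ofFn] at hx
      obtain ⟨i, rfl⟩ := hx
      exact hwne i) (by
      intro hnil
      have : (List.ofFn w).length = 0 := by rw [hnil]; rfl
      simp at this
      omega)
    rw [← ofFn_altv] at hC2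
    have haw : altv w = w' := by rw [hwdef, altv_altv]
    rw [haw, hofFnw', hFvar] at hC2
    have hlen2 : (List.ofFn w).length = n := by simp
    rw [var, hfw, var, hps]
    rw [hps] at hC2
    omega

lemma varbar_add {n : ℕ} (v : Fin n → ℝ) (hv : v ≠ 0) :
    varbar v + (var (altv v) + 1) = n := by
  have hn : 1 ≤ n := by
    obtain ⟨i0, _⟩ : ∃ i, v i ≠ 0 := by
      by_contra hc; push_neg at hc; exact hv (funext fun i => hc i)
    exact i0.pos
  obtain ⟨w, hw, he⟩ := exists_completion v hv
  have hub : ∀ s ∈ {m | ∃ w : Fin n → ℝ, (∀ i, v i ≠ 0 → w i = v i) ∧ var w = m}, s ≤ var w := by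
    rintro s ⟨w', h1, rfl⟩
    have := sum_le v w' h1 hn
    omega
  have : varbar v = var w := by
    apply le_antisymm
    · exact csSup_le ⟨var v, v, fun _ _ => rfl, rfl⟩ hub
    · exact le_csSup ⟨var w, hub⟩ ⟨w, hw, rfl⟩
  omega

lemma listVar_append_singleton (y : ℝ) : ∀ (l : List ℝ) (h : l ≠ []),
    listVar (l ++ [y]) = listVar l + (if l.getLast h * y < 0 then 1 else 0) := by
  intro l
  induction l with
  | nil => intro h; simp at h
  | cons a t ih =>
    intro h
    cases t with
    | nil => simp [listVar_cons_cons, listVar]; congr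
    | cons b r =>
      have hne : (b :: r) ≠ [] := by simp
      have e1 : (a :: b :: r) ++ [y] = a :: b :: (r ++ [y]) := by simp
      rw [e1, listVar_cons_cons]
      have e2 : (b :: (r ++ [y])) = (b :: r) ++ [y] := by simp
      rw [e2, ih hne, listVar_cons_cons, List.getLast_cons hne]
      omega

lemma var_castSucc {N : ℕ} (b : Fin (N+1) → ℝ) (hb : b (Fin.last N) = 0) :
    var b = var (fun i : Fin N => b i.castSucc) := by
  rw [var, var, List.ofFn_succ' b, List.concat_eq_append, List.filter_append]
  have : ([b (Fin.last N)].filter (fun x => x ≠ 0)) = [] := by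
    simp [List.filter, hb]
  rw [this, List.append_nil]

lemma filter_ofFn_ne_nil {N : ℕ} {b : Fin N → ℝ} {i : Fin N} (hi : b i ≠ 0) :
    (List.ofFn b).filter (fun x => x ≠ 0) ≠ [] := by
  apply List.ne_nil_of_mem (a := b i)
  rw [List.mem_filter]
  exact ⟨by rw [List.mem_ofFn]; exact ⟨i, rfl⟩, by simp [hi]⟩

lemma perturb {N : ℕ} (b u : Fin (N+1) → ℝ) (hb : b ≠ 0) (hbl : b (Fin.last N) = 0)
    (hul : u (Fin.last N) ≠ 0) :
    ∃ ε : ℝ, ε ≠ 0 ∧ var b + 1 ≤ var (fun i => b i + ε * u i) := by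
  obtain ⟨i0, hi0⟩ : ∃ i, b i ≠ 0 := by
    by_contra hc; push_neg at hc; exact hb (funext fun i => hc i)
  set fl := (List.ofFn (fun i : Fin N => b i.castSucc)).filter (fun x => x ≠ 0) with hfl
  have hi0l : i0 ≠ Fin.last N := by intro h; rw [h] at hi0; exact hi0 hbl
  obtain ⟨j0, hj0⟩ : ∃ j : Fin N, j.castSucc = i0 := ⟨⟨i0, Fin.val_lt_last hi0l⟩, by
    ext; simp⟩
  have hflne : fl ≠ [] := by
    apply filter_ofFn_ne_nil (i := j0)
    rw [hj0]; exact hi0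
  set g := fl.getLast hflne with hg
  have hgne : g ≠ 0 := mem_filter_ne_zero (List.getLast_mem hflne)
  set δ : ℝ := Finset.univ.inf' (Finset.univ_nonempty) (fun i : Fin (N+1) =>
    (if b i ≠ 0 then |b i| else 1) / (|g * u (Fin.last N) * u i| + 1)) with hδ
  have hδpos : 0 < δ := by
    rw [hδ, Finset.lt_inf'_iff]
    intro i _
    apply div_pos
    · split
      · exact abs_pos.2 ‹b i ≠ 0›
      · norm_num
    · positivity
  set ε : ℝ := -(g * u (Fin.last N)) * δ with hε
  have hεne : ε ≠ 0 := by
    rw [hε]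
    apply mul_ne_zero _ (ne_of_gt hδpos)
    simp only [neg_ne_zero]
    exact mul_ne_zero hgne hul
  have hsmall : ∀ i : Fin (N+1), b i ≠ 0 → |ε * u i| < |b i| := by
    intro i hbi
    have h2 : (0:ℝ) < |g * u (Fin.last N) * u i| + 1 := by positivity
    have h1 : δ * (|g * u (Fin.last N) * u i| + 1) ≤ |b i| := by
      have hle := Finset.inf'_le (f := fun i : Fin (N+1) =>
        (if b i ≠ 0 then |b i| else 1) / (|g * u (Fin.last N) * u i| + 1))
        (Finset.mem_univ i)
      rw [← hδ] at hle
      rw [if_pos hbi] at hle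
      exact (le_div_iff₀ h2).1 hle
    have hεu : |ε * u i| = δ * |g * u (Fin.last N) * u i| := by
      have e : ε * u i = -(g * u (Fin.last N) * u i * δ) := by rw [hε]; ring
      rw [e, abs_neg, abs_mul, abs_of_pos hδpos]; ring
    rw [hεu]
    calc δ * |g * u (Fin.last N) * u i| < δ * (|g * u (Fin.last N) * u i| + 1) := by
          apply mul_lt_mul_of_pos_left _ hδpos; linarith
      _ ≤ |b i| := h1
  have hsign : ∀ i : Fin (N+1), b i ≠ 0 → b i * (b i + ε * u i) > 0 := by
    intro i hbi
    have h1 := hsmall i hbi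
    have h2 : |b i| > 0 := abs_pos.2 hbi
    nlinarith [abs_nonneg (ε * u i), sq_abs (b i), abs_mul_abs_self (b i),
      neg_abs_le (b i * (ε * u i)), abs_mul (b i) (ε * u i), abs_mul_abs_self (ε * u i)]
  -- the comparison vector
  set v' : Fin (N+1) → ℝ := fun i => if i = Fin.last N then -g else b i with hv'
  have hlastval : ε * u (Fin.last N) * (-g) > 0 := by
    have e : ε * u (Fin.last N) * (-g) = g^2 * (u (Fin.last N))^2 * δ := by rw [hε]; ring
    rw [e]
    have h1 : g^2 > 0 := by positivity
    have h2 : (u (Fin.last N))^2 > 0 := by positivity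
    positivity
  refine ⟨ε, hεne, ?_⟩
  have hQ : var v' ≤ var (fun i => b i + ε * u i) := by
    apply var_mono
    intro i hvi
    by_cases hil : i = Fin.last N
    · rw [hil]
      simp only [hv', if_pos rfl]
      rw [hbl, zero_add]
      nlinarith [hlastval]
    · simp only [hv', if_neg hil] at hvi ⊢
      exact hsign i hvi
  have hv'var : var v' = var b + 1 := by
    rw [var, var, List.ofFn_succ' v', List.ofFn_succ' b, List.concat_eq_append,
      List.concat_eq_append, List.filter_append, List.filter_append]
    have e1 : (fun i : Fin N => v' i.castSucc) = (fun i : Fin N => b i.castSucc) := by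
      funext i
      simp only [hv']
      rw [if_neg (by exact Fin.ne_of_lt (Fin.castSucc_lt_last i))]
    have e2 : ([v' (Fin.last N)].filter (fun x => x ≠ 0)) = [-g] := by
      simp only [hv', if_pos rfl]
      simp [hgne]
    have e3 : ([b (Fin.last N)].filter (fun x => x ≠ 0)) = [] := by
      simp [List.filter, hbl]
    rw [e1, e2, e3, List.append_nil, ← hfl]
    rw [listVar_append_singleton (-g) fl hflne, ← hg]
    have : g * (-g) < 0 := by nlinarith [mul_self_pos.mpr hgne]
    rw [if_pos this]
  have hvb : var b + 1 = var v' := hv'var.symm ▸ rfl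
  omega

open Module

lemma exists_ne_zero_of_finrank_pos {n : ℕ} (Y : Submodule ℝ (Fin n → ℝ))
    (h : 1 ≤ finrank ℝ Y) : ∃ v ∈ Y, v ≠ 0 := by
  by_contra hc
  push_neg at hc
  have : Y = ⊥ := by
    rw [Submodule.eq_bot_iff]
    exact fun x hx => hc x hx
  rw [this, finrank_bot] at h
  omega

noncomputable def Rmap (n : ℕ) : (Fin (n+1) → ℝ) →ₗ[ℝ] (Fin n → ℝ) :=
  LinearMap.funLeft ℝ ℝ Fin.castSucc

lemma Rmap_apply {n : ℕ} (v : Fin (n+1) → ℝ) (j : Fin n) : Rmap n v j = v j.castSucc := rfl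

lemma Rmap_inj {n : ℕ} (Y₀ : Submodule ℝ (Fin (n+1) → ℝ))
    (h0 : ∀ v ∈ Y₀, v (Fin.last n) = 0) {v : Fin (n+1) → ℝ} (hv : v ∈ Y₀)
    (hz : Rmap n v = 0) : v = 0 := by
  funext i
  rcases Fin.lastCases (motive := fun i => v i = 0) (h0 v hv) (fun j => by
    have := congrFun hz j
    rw [Rmap_apply] at this
    exact this) i with h
  exact h

lemma finrank_map_Rmap {n : ℕ} (Y₀ : Submodule ℝ (Fin (n+1) → ℝ))
    (h0 : ∀ v ∈ Y₀, v (Fin.last n) = 0) :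
    finrank ℝ (Y₀.map (Rmap n)) = finrank ℝ Y₀ := by
  have hinj : Function.Injective ((Rmap n).comp Y₀.subtype) := by
    rw [← LinearMap.ker_eq_bot, Submodule.eq_bot_iff]
    rintro ⟨x, hx⟩ hker
    have : Rmap n x = 0 := hker
    have := Rmap_inj Y₀ h0 hx this
    exact Subtype.ext this
  have e := LinearEquiv.ofInjective _ hinj
  have hr : LinearMap.range ((Rmap n).comp Y₀.subtype) = Y₀.map (Rmap n) := by
    rw [LinearMap.range_comp, Submodule.range_subtype]
  rw [e.finrank_eq, hr]

lemma finrank_inf_ker {n m : ℕ} (Y : Submodule ℝ (Fin (n+1) → ℝ))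
    (hY : finrank ℝ Y = m) {u : Fin (n+1) → ℝ} (hu : u ∈ Y) (hul : u (Fin.last n) ≠ 0) :
    finrank ℝ (Y ⊓ LinearMap.ker (LinearMap.proj (R := ℝ) (φ := fun _ : Fin (n+1) => ℝ)
      (Fin.last n)) : Submodule ℝ (Fin (n+1) → ℝ)) + 1 = m := by
  set K := LinearMap.ker (LinearMap.proj (R := ℝ) (φ := fun _ : Fin (n+1) => ℝ) (Fin.last n))
  set f : ↥Y →ₗ[ℝ] ℝ :=
    (LinearMap.proj (R := ℝ) (φ := fun _ : Fin (n+1) => ℝ) (Fin.last n)).comp Y.subtype with hf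
  have hrank := LinearMap.finrank_range_add_finrank_ker f
  rw [hY] at hrank
  have hrange : LinearMap.range f = ⊤ := by
    rw [LinearMap.range_eq_top]
    intro c
    refine ⟨⟨(c / u (Fin.last n)) • u, Y.smul_mem _ hu⟩, ?_⟩
    show ((c / u (Fin.last n)) • u) (Fin.last n) = c
    simp only [Pi.smul_apply, smul_eq_mul]
    field_simp
  have h1 : finrank ℝ (LinearMap.range f) = 1 := by
    rw [hrange, finrank_top, finrank_self]
  have hker : finrank ℝ (LinearMap.ker f) = finrank ℝ (Y ⊓ K : Submodule ℝ (Fin (n+1) → ℝ)) := by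
    have he1 : LinearMap.ker f = Submodule.comap Y.subtype (Y ⊓ K) := by
      ext ⟨x, hx⟩
      simp only [LinearMap.mem_ker, Submodule.mem_comap, Submodule.mem_inf]
      constructor
      · intro h; exact ⟨hx, h⟩
      · intro h; exact h.2
    rw [he1]
    exact (Submodule.comapSubtypeEquivOfLe inf_le_left).finrank_eq
  omega

lemma mem_inf_last_zero {n : ℕ} {Y : Submodule ℝ (Fin (n+1) → ℝ)} {v : Fin (n+1) → ℝ}
    (hv : v ∈ Y ⊓ LinearMap.ker (LinearMap.proj (R := ℝ) (φ := fun _ : Fin (n+1) => ℝ)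
      (Fin.last n))) : v (Fin.last n) = 0 := by
  have := (Submodule.mem_inf.1 hv).2
  rwa [LinearMap.mem_ker] at this

lemma var_Rmap {n : ℕ} (v : Fin (n+1) → ℝ) (hvl : v (Fin.last n) = 0) :
    var (Rmap n v) = var v := by
  rw [var_castSucc v hvl]
  rfl

lemma lemL : ∀ (n m q : ℕ) (Y : Submodule ℝ (Fin n → ℝ)), 1 ≤ m → finrank ℝ Y = m →
    (∀ v ∈ Y, v ≠ 0 → q ≤ var v) → ∃ b ∈ Y, b ≠ 0 ∧ q + (m - 1) ≤ var b := by
  intro n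
  induction n with
  | zero =>
    intro m q Y hm hY _
    have h1 := Submodule.finrank_le Y
    rw [Module.finrank_fin_fun] at h1
    omega
  | succ n ih =>
    intro m q Y hm hY h
    by_cases hm1 : m = 1
    · obtain ⟨b, hbY, hbne⟩ := exists_ne_zero_of_finrank_pos Y (by omega)
      exact ⟨b, hbY, hbne, by subst hm1; simpa using h b hbY hbne⟩
    · by_cases hdead : ∀ v ∈ Y, v (Fin.last n) = 0
      · set Y' := Y.map (Rmap n) with hY'
        have hfr : finrank ℝ Y' = m := by rw [hY', finrank_map_Rmap Y hdead, hY]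
        have hh : ∀ z ∈ Y', z ≠ 0 → q ≤ var z := by
          rintro z ⟨v, hv, rfl⟩ hzne
          have hvne : v ≠ 0 := by rintro rfl; simp at hzne
          rw [var_Rmap v (hdead v hv)]
          exact h v hv hvne
        obtain ⟨b', hb'Y, hb'ne, hb'var⟩ := ih m q Y' hm hfr hh
        obtain ⟨b, hbY, rfl⟩ := hb'Y
        have hbne : b ≠ 0 := by rintro rfl; simp at hb'ne
        refine ⟨b, hbY, hbne, ?_⟩
        rwa [var_Rmap b (hdead b hbY)] at hb'var
      · push_neg at hdead
        obtain ⟨u, huY, hul⟩ := hdead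
        set Y₀ := Y ⊓ LinearMap.ker (LinearMap.proj (R := ℝ)
          (φ := fun _ : Fin (n+1) => ℝ) (Fin.last n)) with hY₀
        have hfr0 : finrank ℝ Y₀ + 1 = m := finrank_inf_ker Y hY huY hul
        have h0 : ∀ v ∈ Y₀, v (Fin.last n) = 0 := fun v hv => mem_inf_last_zero hv
        set Z := Y₀.map (Rmap n) with hZ
        have hfrZ : finrank ℝ Z = m - 1 := by rw [hZ, finrank_map_Rmap Y₀ h0]; omega
        have hhZ : ∀ z ∈ Z, z ≠ 0 → q ≤ var z := by
          rintro z ⟨v, hv, rfl⟩ hzne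
          have hvne : v ≠ 0 := by rintro rfl; simp at hzne
          rw [var_Rmap v (h0 v hv)]
          exact h v hv.1 hvne
        obtain ⟨b', hb'Z, hb'ne, hb'var⟩ := ih (m-1) q Z (by omega) hfrZ hhZ
        obtain ⟨b, hbY₀, rfl⟩ := hb'Z
        have hbne : b ≠ 0 := by rintro rfl; simp at hb'ne
        have hbvar : q + (m - 1 - 1) ≤ var b := by
          rwa [var_Rmap b (h0 b hbY₀)] at hb'var
        obtain ⟨ε, hεne, hεvar⟩ := perturb b u hbne (h0 b hbY₀) hul
        set c : Fin (n+1) → ℝ := b + ε • u with hc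
        have hceq : c = fun i => b i + ε * u i := by
          funext i; simp [hc]
        have hcY : c ∈ Y := Y.add_mem hbY₀.1 (Y.smul_mem ε huY)
        have hcne : c ≠ 0 := by
          intro hzero
          have := congrFun hzero (Fin.last n)
          rw [hceq] at this
          simp only [Pi.zero_apply] at this
          rw [h0 b hbY₀, zero_add] at this
          exact hul (by
            rcases mul_eq_zero.1 this with h' | h'
            · exact absurd h' hεne
            · exact h')
        refine ⟨c, hcY, hcne, ?_⟩
        rw [hceq]
        omega

lemma lemLup : ∀ (n m Q : ℕ) (Y : Submodule ℝ (Fin n → ℝ)), 1 ≤ m → finrank ℝ Y = m →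
    (∀ v ∈ Y, v ≠ 0 → var v ≤ Q) → ∃ b ∈ Y, b ≠ 0 ∧ var b + (m - 1) ≤ Q := by
  intro n
  induction n with
  | zero =>
    intro m Q Y hm hY _
    have h1 := Submodule.finrank_le Y
    rw [Module.finrank_fin_fun] at h1
    omega
  | succ n ih =>
    intro m Q Y hm hY h
    by_cases hm1 : m = 1
    · obtain ⟨b, hbY, hbne⟩ := exists_ne_zero_of_finrank_pos Y (by omega)
      exact ⟨b, hbY, hbne, by subst hm1; simpa using h b hbY hbne⟩
    · by_cases hdead : ∀ v ∈ Y, v (Fin.last n) = 0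
      · set Y' := Y.map (Rmap n) with hY'
        have hfr : finrank ℝ Y' = m := by rw [hY', finrank_map_Rmap Y hdead, hY]
        have hh : ∀ z ∈ Y', z ≠ 0 → var z ≤ Q := by
          rintro z ⟨v, hv, rfl⟩ hzne
          have hvne : v ≠ 0 := by rintro rfl; simp at hzne
          rw [var_Rmap v (hdead v hv)]
          exact h v hv hvne
        obtain ⟨b', hb'Y, hb'ne, hb'var⟩ := ih m Q Y' hm hfr hh
        obtain ⟨b, hbY, rfl⟩ := hb'Y
        have hbne : b ≠ 0 := by rintro rfl; simp at hb'ne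
        refine ⟨b, hbY, hbne, ?_⟩
        rwa [var_Rmap b (hdead b hbY)] at hb'var
      · push_neg at hdead
        obtain ⟨u, huY, hul⟩ := hdead
        set Y₀ := Y ⊓ LinearMap.ker (LinearMap.proj (R := ℝ)
          (φ := fun _ : Fin (n+1) => ℝ) (Fin.last n)) with hY₀
        have hfr0 : finrank ℝ Y₀ + 1 = m := finrank_inf_ker Y hY huY hul
        have h0 : ∀ v ∈ Y₀, v (Fin.last n) = 0 := fun v hv => mem_inf_last_zero hv
        -- every nonzero element of Y₀ has var ≤ Q - 1
        have hkey : ∀ v ∈ Y₀, v ≠ 0 → var v + 1 ≤ Q := by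
          intro v hv hvne
          obtain ⟨ε, hεne, hεvar⟩ := perturb v u hvne (h0 v hv) hul
          set c : Fin (n+1) → ℝ := v + ε • u with hc
          have hceq : c = fun i => v i + ε * u i := by funext i; simp [hc]
          have hcY : c ∈ Y := Y.add_mem hv.1 (Y.smul_mem ε huY)
          have hcne : c ≠ 0 := by
            intro hzero
            have := congrFun hzero (Fin.last n)
            rw [hceq] at this
            simp only [Pi.zero_apply] at this
            rw [h0 v hv, zero_add] at this
            exact hul (by
              rcases mul_eq_zero.1 this with h' | h'
              · exact absurd h' hεne
              · exact h')
          have := h c hcY hcne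
          rw [hceq] at this
          omega
        set Z := Y₀.map (Rmap n) with hZ
        have hfrZ : finrank ℝ Z = m - 1 := by rw [hZ, finrank_map_Rmap Y₀ h0]; omega
        have hhZ : ∀ z ∈ Z, z ≠ 0 → var z ≤ Q - 1 := by
          rintro z ⟨v, hv, rfl⟩ hzne
          have hvne : v ≠ 0 := by rintro rfl; simp at hzne
          rw [var_Rmap v (h0 v hv)]
          have := hkey v hv hvne
          omega
        obtain ⟨b', hb'Z, hb'ne, hb'var⟩ := ih (m-1) (Q-1) Z (by omega) hfrZ hhZ
        obtain ⟨b, hbY₀, rfl⟩ := hb'Z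
        have hbne : b ≠ 0 := by rintro rfl; simp at hb'ne
        have hQ1 : 1 ≤ Q := by
          have := hkey b hbY₀ hbne
          omega
        have hbvar : var b + (m - 1 - 1) ≤ Q - 1 := by
          rwa [var_Rmap b (h0 b hbY₀)] at hb'var
        exact ⟨b, hbY₀.1, hbne, by omega⟩

noncomputable def altMap (n : ℕ) : (Fin n → ℝ) →ₗ[ℝ] (Fin n → ℝ) where
  toFun := altv
  map_add' x y := by funext i; simp [altv]; ring
  map_smul' c x := by funext i; simp [altv]; ring

lemma altMap_apply {n : ℕ} (v : Fin n → ℝ) : altMap n v = altv v := rfl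

theorem stmt5 (n m k : ℕ) (hm : 1 ≤ m) (X : Submodule ℝ (Fin n → ℝ))
    (hX : Module.finrank ℝ X = m)
    (h : ∀ v ∈ X, v ≠ 0 → k ≤ varbar v ∧ varbar v ≤ k + m - 1) :
    (∃ v ∈ X, v ≠ 0 ∧ varbar v = k + m - 1) ∧ (∃ w ∈ X, w ≠ 0 ∧ varbar w = k) := by
  obtain ⟨v0, hv0X, hv0ne⟩ := exists_ne_zero_of_finrank_pos X (by omega)
  have hn : 1 ≤ n := by
    rcases Nat.eq_zero_or_pos n with h0 | h0
    · exfalso; apply hv0ne; subst h0; funext i; exact i.elim0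
    · exact h0
  have hk : k + 1 ≤ n := by
    have h1 := (h v0 hv0X hv0ne).1
    have h2 := varbar_add v0 hv0ne
    omega
  -- the alternated subspace
  set Y := X.map (altMap n) with hYdef
  have hfrY : finrank ℝ Y = m := by
    rw [hYdef]
    have e := LinearEquiv.finrank_map_eq (LinearEquiv.ofInvolutive (altMap n) altv_altv) X
    have e2 : (↑(LinearEquiv.ofInvolutive (altMap n) altv_altv) :
        (Fin n → ℝ) →ₗ[ℝ] (Fin n → ℝ)) = altMap n := rfl
    rw [e2] at e
    rw [e, hX]
  -- transfer bounds to Y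
  have hYfact : ∀ u ∈ Y, u ≠ 0 → ∃ x ∈ X, x ≠ 0 ∧ u = altv x ∧
      varbar x + var u + 1 = n ∧ k ≤ varbar x ∧ varbar x ≤ k + m - 1 := by
    rintro u ⟨x, hxX, rfl⟩ hune
    have hxne : x ≠ 0 := by rintro rfl; exact hune (map_zero _)
    have hd := varbar_add x hxne
    have hb := h x hxX hxne
    exact ⟨x, hxX, hxne, rfl, by rw [altMap_apply]; omega, hb.1, hb.2⟩
  have hup : ∀ u ∈ Y, u ≠ 0 → var u ≤ n - 1 - k := by
    intro u huY hune
    obtain ⟨x, _, _, _, hd, hb1, _⟩ := hYfact u huY hune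
    omega
  have hlow : ∀ u ∈ Y, u ≠ 0 → n - (k + m - 1) - 1 ≤ var u := by
    intro u huY hune
    obtain ⟨x, _, _, _, hd, _, hb2⟩ := hYfact u huY hune
    omega
  -- vector with few sign changes in Y  (gives varbar = k+m-1)
  obtain ⟨a, haY, hane, hav⟩ := lemLup n m (n - 1 - k) Y hm hfrY hup
  obtain ⟨xa, hxaX, hxane, hae, had, hak, ham⟩ := hYfact a haY hane
  have hkm : k + m ≤ n := by omega
  have goal1 : varbar xa = k + m - 1 := by omega
  -- vector with many sign changes in Y  (gives varbar = k)
  obtain ⟨b, hbY, hbne, hbv⟩ := lemL n m (n - (k + m - 1) - 1) Y hm hfrY hlow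
  obtain ⟨xb, hxbX, hxbne, hbe, hbd, hbk, hbm⟩ := hYfact b hbY hbne
  have goal2 : varbar xb = k := by omega
  exact ⟨⟨xa, hxaX, hxane, goal1⟩, ⟨xb, hxbX, hxbne, goal2⟩⟩
end

section
/- The graph on sign vectors in {+,-}^n with exactly k sign changes (considered modulo global negation), where two vectors are adjacent if they differ in exactly one component (up to global sign), is connected. -/
open scoped BigOperators

/-- Adjacency in the graph on sign vectors in `{+,-}^n` with exactly `k` sign changes,
considered up to global negation: two such vectors are adjacent iff one differs from the
other, or from its negation, in exactly one component. -/
noncomputable def adjRel (n k : ℕ) (x y : Fin n → ℝ) : Prop :=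
  ((∀ i, x i = 1 ∨ x i = -1) ∧ (∀ i, y i = 1 ∨ y i = -1) ∧ var x = k ∧ var y = k) ∧
  ((∃! i, x i ≠ y i) ∨ (∃! i, x i ≠ -y i))

/-!
A `±1` vector is determined up to a global sign by its set of sign changes, the pairs
`p ≤ n - 2` with `σ p * σ (p + 1) < 0`, and `var` is the size of that set. Flipping component
`p + 1` toggles exactly the pairs `p` and `p + 1`; so when there is a sign change at `p` but
not at `p + 1`, the flip slides it one step to the right without changing `var`. Sliding while
possible strictly decreases `∑ p ∈ S, (n - p)` and ends when the `k` sign changes occupy the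
last `k` pairs. Any two vectors with `var = k` thus reach vectors with the same change set,
which agree up to sign.
-/

open Finset

theorem listVar_eq_card (l : List ℝ) :
    listVar l = #{p ∈ range (l.length - 1) | l.getD p 0 * l.getD (p + 1) 0 < 0} := by
  match l with
  | [] | [_] => rfl
  | a :: b :: t =>
    rw [listVar, listVar_eq_card (b :: t)]
    simp only [List.length_cons, Nat.add_sub_cancel, card_filter, sum_range_succ',
      List.getD_cons_succ, List.getD_cons_zero]
    exact Nat.add_comm _ _

theorem listVar_map_neg_s8 (l : List ℝ) : listVar (l.map Neg.neg) = listVar l := by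
  match l with
  | [] | [_] => rfl
  | a :: b :: t =>
    simp only [List.map_cons, listVar, neg_mul_neg]
    rw [← List.map_cons, listVar_map_neg_s8]

theorem var_neg {n : ℕ} (v : Fin n → ℝ) : var (-v) = var v := by
  have : (fun x : ℝ => decide (x ≠ 0)) ∘ Neg.neg = fun x => decide (x ≠ 0) := by
    funext x; simp
  rw [var, var, show List.ofFn (-v) = (List.ofFn v).map Neg.neg by rw [List.map_ofFn]; rfl,
    List.filter_map, this, listVar_map_neg_s8]

theorem Finset.eq_Ico_of_succ_mem {S : Finset ℕ} {N : ℕ} (hS : S ⊆ range N)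
    (hsucc : ∀ p ∈ S, p + 1 < N → p + 1 ∈ S) : S = Ico (N - #S) N := by
  have hup : ∀ p ∈ S, ∀ q, p ≤ q → q < N → q ∈ S := by
    intro p hp q hpq
    induction q, hpq using Nat.le_induction with
    | base => exact fun _ => hp
    | succ q _ ih => exact fun hq => hsucc q (ih (by omega)) hq
  ext p
  rw [mem_Ico]
  constructor
  · intro hp
    have hpN : p < N := mem_range.mp (hS hp)
    have : Ico p N ⊆ S := fun q hq => hup p hp q (mem_Ico.mp hq).1 (mem_Ico.mp hq).2
    have := card_le_card this
    rw [Nat.card_Ico] at this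
    omega
  · rintro ⟨hlo, hhi⟩
    by_contra hp
    have : S ⊆ Ico (p + 1) N := fun q hq => mem_Ico.mpr
      ⟨not_le.mp fun hqp => hp (hup q hq p hqp hhi), mem_range.mp (hS hq)⟩
    have := card_le_card this
    rw [Nat.card_Ico] at this
    omega

theorem neg_lt_zero_iff_not {α : Type*} [AddCommGroup α] [LinearOrder α] [IsOrderedAddMonoid α]
    {x : α} (hx : x ≠ 0) : -x < 0 ↔ ¬x < 0 := by
  rw [neg_neg_iff_pos, not_lt]
  exact ⟨le_of_lt, fun h => lt_of_le_of_ne h hx.symm⟩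

theorem ne_zero_of_eq_one_or_neg_one {a : ℝ} (ha : a = 1 ∨ a = -1) : a ≠ 0 := by
  rcases ha with rfl | rfl <;> norm_num

theorem mul_eq_mul_of_mul_neg_iff {a b c d : ℝ} (ha : a = 1 ∨ a = -1) (hb : b = 1 ∨ b = -1)
    (hc : c = 1 ∨ c = -1) (hd : d = 1 ∨ d = -1) (h : a * b < 0 ↔ c * d < 0) : b * d = a * c := by
  rcases ha with rfl | rfl <;> rcases hb with rfl | rfl <;> rcases hc with rfl | rfl <;>
    rcases hd with rfl | rfl <;> norm_num at *

theorem mul_eq_neg_one_of_ne {a b : ℝ} (ha : a = 1 ∨ a = -1) (hb : b = 1 ∨ b = -1) (h : a ≠ b) :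
    a * b = -1 := by
  rcases ha with rfl | rfl <;> rcases hb with rfl | rfl <;> norm_num at *

theorem mul_eq_one_of_ne_neg {a b : ℝ} (ha : a = 1 ∨ a = -1) (hb : b = 1 ∨ b = -1) (h : a ≠ -b) :
    a * b = 1 := by
  rcases ha with rfl | rfl <;> rcases hb with rfl | rfl <;> norm_num at *

section SignVector

variable {n : ℕ}

def zeroExt (σ : Fin n → ℝ) (i : ℕ) : ℝ := if h : i < n then σ ⟨i, h⟩ else 0

theorem zeroExt_of_lt (σ : Fin n → ℝ) {i : ℕ} (h : i < n) : zeroExt σ i = σ ⟨i, h⟩ := dif_pos h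

@[simp]
theorem zeroExt_val (σ : Fin n → ℝ) (i : Fin n) : zeroExt σ i = σ i := dif_pos i.isLt

theorem getD_ofFn_eq_zeroExt (σ : Fin n → ℝ) (i : ℕ) : (List.ofFn σ).getD i 0 = zeroExt σ i := by
  unfold zeroExt
  split_ifs with h <;> simp [h]

noncomputable def signChanges (σ : Fin n → ℝ) : Finset ℕ :=
  {p ∈ range (n - 1) | zeroExt σ p * zeroExt σ (p + 1) < 0}

theorem var_eq_card_signChanges {σ : Fin n → ℝ} (hσ : ∀ i, σ i ≠ 0) :
    var σ = #(signChanges σ) := by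
  rw [var, List.filter_eq_self.mpr, listVar_eq_card, List.length_ofFn]
  · simp only [getD_ofFn_eq_zeroExt, signChanges]
  · simpa [List.mem_ofFn] using hσ

theorem signChanges_subset_range (σ : Fin n → ℝ) : signChanges σ ⊆ range (n - 1) :=
  filter_subset _ _

theorem mem_signChanges {σ : Fin n → ℝ} {p : ℕ} :
    p ∈ signChanges σ ↔ p < n - 1 ∧ zeroExt σ p * zeroExt σ (p + 1) < 0 := by
  simp [signChanges]

def flipAt (σ : Fin n → ℝ) (j : Fin n) : Fin n → ℝ := Function.update σ j (-σ j)

theorem zeroExt_flipAt (σ : Fin n → ℝ) (j : Fin n) (i : ℕ) :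
    zeroExt (flipAt σ j) i = if i = j then -zeroExt σ i else zeroExt σ i := by
  by_cases h : i < n
  · lift i to Fin n using h
    simp only [zeroExt_val, flipAt, Function.update_apply, Fin.val_inj]
    split_ifs with hij <;> simp [hij]
  · simp [zeroExt, h]

theorem flipAt_ne_zero {σ : Fin n → ℝ} (hσ : ∀ i, σ i ≠ 0) (j : Fin n) (i : Fin n) :
    flipAt σ j i ≠ 0 := by
  rcases eq_or_ne i j with rfl | h
  · simpa [flipAt] using hσ i
  · simpa [flipAt, h] using hσ i

theorem flipAt_eq_one_or_neg_one {σ : Fin n → ℝ} (hσ : ∀ i, σ i = 1 ∨ σ i = -1) (j i : Fin n) :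
    flipAt σ j i = 1 ∨ flipAt σ j i = -1 := by
  rcases eq_or_ne i j with rfl | h
  · rcases hσ i with h | h <;> simp [flipAt, h]
  · simpa [flipAt, h] using hσ i

theorem existsUnique_ne_flipAt {σ : Fin n → ℝ} {j : Fin n} (hj : σ j ≠ 0) :
    ∃! i, σ i ≠ flipAt σ j i := by
  refine ⟨j, by simpa [flipAt, self_eq_neg] using hj, fun i hi => ?_⟩
  by_contra h
  simp [flipAt, h] at hi

theorem mem_signChanges_flipAt {σ : Fin n → ℝ} (hσ : ∀ i, σ i ≠ 0) (j : Fin n) {p : ℕ}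
    (hp : p < n - 1) :
    p ∈ signChanges (flipAt σ j) ↔ (p ∈ signChanges σ ↔ p ≠ j ∧ p + 1 ≠ j) := by
  have h0 : zeroExt σ p * zeroExt σ (p + 1) ≠ 0 := by
    rw [zeroExt_of_lt σ (by omega), zeroExt_of_lt σ (by omega)]
    exact mul_ne_zero (hσ _) (hσ _)
  simp only [mem_signChanges, hp, true_and, zeroExt_flipAt]
  by_cases h1 : p = j
  · rw [if_pos h1, if_neg (by omega), neg_mul, neg_lt_zero_iff_not h0]
    tauto
  by_cases h2 : p + 1 = j
  · rw [if_neg h1, if_pos h2, mul_neg, neg_lt_zero_iff_not h0]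
    tauto
  · rw [if_neg h1, if_neg h2]
    tauto

theorem signChanges_flipAt_succ {σ : Fin n → ℝ} (hσ : ∀ i, σ i ≠ 0) {p : ℕ} (hp : p + 2 < n)
    (hpS : p ∈ signChanges σ) (hpS' : p + 1 ∉ signChanges σ) :
    signChanges (flipAt σ ⟨p + 1, by omega⟩) = insert (p + 1) ((signChanges σ).erase p) := by
  ext q
  by_cases hq : q < n - 1
  · rw [mem_signChanges_flipAt hσ _ hq, mem_insert, mem_erase]
    rcases eq_or_ne q p with rfl | h1
    · simp [hpS]
    rcases eq_or_ne q (p + 1) with rfl | h2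
    · simp [hpS']
    · simp [h1, h2]
  · have hq' : q ∉ signChanges σ := fun h => hq (mem_signChanges.mp h).1
    simp [mem_signChanges, hq, hq', show q ≠ p + 1 by omega]

theorem adjRel_flipAt {k : ℕ} {σ : Fin n → ℝ} (hσ : ∀ i, σ i = 1 ∨ σ i = -1) {j : Fin n}
    (hk : var σ = k) (hk' : var (flipAt σ j) = k) : adjRel n k σ (flipAt σ j) :=
  ⟨⟨hσ, flipAt_eq_one_or_neg_one hσ j, hk, hk'⟩,
    Or.inl (existsUnique_ne_flipAt (ne_zero_of_eq_one_or_neg_one (hσ j)))⟩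

theorem exists_reflTransGen_succ_mem_signChanges {σ : Fin n → ℝ}
    (hσ : ∀ i, σ i = 1 ∨ σ i = -1) :
    ∃ σ', Relation.ReflTransGen (adjRel n (var σ)) σ σ' ∧ (∀ i, σ' i = 1 ∨ σ' i = -1) ∧
      var σ' = var σ ∧ ∀ p ∈ signChanges σ', p + 1 < n - 1 → p + 1 ∈ signChanges σ' := by
  have hσ0 : ∀ i, σ i ≠ 0 := fun i => ne_zero_of_eq_one_or_neg_one (hσ i)
  by_cases hslide : ∃ p ∈ signChanges σ, p + 1 < n - 1 ∧ p + 1 ∉ signChanges σ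
  · obtain ⟨p, hpS, hp, hpS'⟩ := hslide
    have hS := signChanges_flipAt_succ hσ0 (by omega) hpS hpS'
    have hvar : var (flipAt σ ⟨p + 1, by omega⟩) = var σ := by
      rw [var_eq_card_signChanges hσ0, var_eq_card_signChanges (flipAt_ne_zero hσ0 _), hS,
        card_insert_of_notMem (by simp [hpS']), card_erase_add_one hpS]
    obtain ⟨σ', hpath, hσ', hvar', hpacked⟩ :=
      exists_reflTransGen_succ_mem_signChanges (flipAt_eq_one_or_neg_one hσ ⟨p + 1, by omega⟩)
    rw [hvar] at hpath hvar'
    exact ⟨σ', .head (adjRel_flipAt hσ rfl hvar) hpath, hσ', hvar', hpacked⟩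
  · push Not at hslide
    exact ⟨σ, .refl, hσ, rfl, hslide⟩
termination_by ∑ p ∈ signChanges σ, (n - p)
decreasing_by
  rw [hS, sum_insert (by simp [hpS']), ← sum_erase_add _ _ hpS]
  omega

theorem eq_or_eq_neg_of_signChanges_eq {σ τ : Fin n → ℝ} (hσ : ∀ i, σ i = 1 ∨ σ i = -1)
    (hτ : ∀ i, τ i = 1 ∨ τ i = -1) (h : signChanges σ = signChanges τ) : σ = τ ∨ σ = -τ := by
  have hstep : ∀ p, p + 1 < n →
      zeroExt σ (p + 1) * zeroExt τ (p + 1) = zeroExt σ p * zeroExt τ p := by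
    intro p hp
    have hmem : p ∈ signChanges σ ↔ p ∈ signChanges τ := by rw [h]
    simp only [mem_signChanges, show p < n - 1 by omega, true_and,
      zeroExt_of_lt _ hp, zeroExt_of_lt _ (show p < n by omega)] at hmem ⊢
    exact mul_eq_mul_of_mul_neg_iff (hσ _) (hσ _) (hτ _) (hτ _) hmem
  have hconst : ∀ i < n, zeroExt σ i * zeroExt τ i = zeroExt σ 0 * zeroExt τ 0 := by
    intro i
    induction i with
    | zero => exact fun _ => rfl
    | succ i ih => exact fun hi => (hstep i hi).trans (ih (by omega))
  have hij : ∀ i j, σ i * τ i = σ j * τ j := fun i j => by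
    simpa using (hconst i i.isLt).trans (hconst j j.isLt).symm
  by_contra hne
  obtain ⟨i, hi⟩ := Function.ne_iff.mp (not_or.mp hne).1
  obtain ⟨j, hj⟩ := Function.ne_iff.mp (not_or.mp hne).2
  have := hij i j
  rw [mul_eq_neg_one_of_ne (hσ i) (hτ i) hi, mul_eq_one_of_ne_neg (hσ j) (hτ j) hj] at this
  norm_num at this

end SignVector

instance (n k : ℕ) : Std.Symm (adjRel n k) where
  symm x y := fun ⟨⟨hx, hy, hxk, hyk⟩, hdiff⟩ => ⟨⟨hy, hx, hyk, hxk⟩, by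
    have hsymm : ∀ i, y i ≠ -x i ↔ x i ≠ -y i := fun i => by
      rw [ne_comm, ne_eq, ne_eq, neg_eq_iff_eq_neg]
    rcases hdiff with h | h
    exacts [.inl (by simpa only [ne_comm] using h), .inr (by simpa only [hsymm] using h)]⟩

theorem adjRel_neg {n k : ℕ} {x y : Fin n → ℝ} (h : adjRel n k x y) : adjRel n k (-x) (-y) := by
  obtain ⟨⟨hx, hy, hxk, hyk⟩, hdiff⟩ := h
  refine ⟨⟨fun i => ?_, fun i => ?_, by rwa [var_neg], by rwa [var_neg]⟩, ?_⟩
  · rcases hx i with h | h <;> simp [h]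
  · rcases hy i with h | h <;> simp [h]
  · simpa only [Pi.neg_apply, ne_eq, neg_inj] using hdiff

theorem stmt8_general (n k : ℕ)
    (σ τ : Fin n → ℝ)
    (hσ : ∀ i, σ i = 1 ∨ σ i = -1) (hτ : ∀ i, τ i = 1 ∨ τ i = -1)
    (hσv : var σ = k) (hτv : var τ = k) :
    Relation.ReflTransGen (adjRel n k) σ τ ∨ Relation.ReflTransGen (adjRel n k) σ (-τ) := by
  obtain ⟨σ', hσσ', hσ', hσv', hσpacked⟩ := exists_reflTransGen_succ_mem_signChanges hσ
  obtain ⟨τ', hττ', hτ', hτv', hτpacked⟩ := exists_reflTransGen_succ_mem_signChanges hτ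
  rw [hσv] at hσσ' hσv'
  rw [hτv] at hττ' hτv'
  have hcard : #(signChanges σ') = #(signChanges τ') := by
    rw [← var_eq_card_signChanges (fun i => ne_zero_of_eq_one_or_neg_one (hσ' i)),
      ← var_eq_card_signChanges (fun i => ne_zero_of_eq_one_or_neg_one (hτ' i)), hσv', hτv']
  have hS : signChanges σ' = signChanges τ' := by
    rw [eq_Ico_of_succ_mem (signChanges_subset_range _) hσpacked,
      eq_Ico_of_succ_mem (signChanges_subset_range _) hτpacked, hcard]
  rcases eq_or_eq_neg_of_signChanges_eq hσ' hτ' hS with rfl | rfl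
  · exact .inl (hσσ'.trans (symm hττ'))
  · exact .inr (hσσ'.trans (symm (hττ'.lift Neg.neg fun _ _ => adjRel_neg)))

theorem stmt8 (n k : ℕ) (hn : 0 < n) (hk : k ≤ n - 1)
    (σ τ : Fin n → ℝ)
    (hσ : ∀ i, σ i = 1 ∨ σ i = -1) (hτ : ∀ i, τ i = 1 ∨ τ i = -1)
    (hσv : var σ = k) (hτv : var τ = k) :
    Relation.ReflTransGen (adjRel n k) σ τ ∨ Relation.ReflTransGen (adjRel n k) σ (-τ) :=
  stmt8_general n k σ τ hσ hτ hσv hτv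
end
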